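/- For every pair of real constants m, x₀ > 0, the circular 3-web on the unit sphere with polar curve Γ is hexagonal; precisely, there exist nonempty open intervals I₁, I₂, I₃ ⊆ ℝ and continuous strictly monotone functions φᵢ : Iᵢ → ℝ (i = 1,2,3) such that: (i) for every (t₁, t₂) ∈ I₁ × I₂ there exists t₃ ∈ I₃ for which the three points Γ(t₁), Γ(t₂), Γ(t₃) lie on a common plane tangent to the quadric X²+Y²+Z² = U², i.e. there exists (a,b,c,d) ≠ (0,0,0,0) in ℝ⁴ with a² + b² + c² = d² and a·X(tᵢ) + b·Y(tᵢ) + c·Z(tᵢ) + d·U(tᵢ) = 0 for i = 1,2,3; and (ii) whenever tᵢ ∈ Iᵢ (i = 1,2,3) are such that Γ(t₁), Γ(t₂), Γ(t₃) lie on a common tangent plane of the quadric, then φ₁(t₁) + φ₂(t₂) + φ₃(t₃) = 0 (an abelian relation, expressing vanishing of the Blaschke curvature via the converse of Abel's theorem). -/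

import Mathlib

/-- The components of the twisted cubic `Γ(t) = (m(t²−1), t(t²−1), m·x₀·t, m·x₀·t²)`. -/
def gammaAff (m x₀ t : ℝ) : Fin 4 → ℝ :=
  ![m * (t ^ 2 - 1), t * (t ^ 2 - 1), m * x₀ * t, m * x₀ * t ^ 2]

/-- The three points `Γ(t₁), Γ(t₂), Γ(t₃)` lie on a common plane
`{a·X + b·Y + c·Z + d·U = 0}` tangent to the Möbius quadric `X²+Y²+Z² = U²`
(tangency of the plane being `a² + b² + c² = d²`, with `(a,b,c,d) ≠ (0,0,0,0)`). -/
def OnCommonTangentPlane (m x₀ t₁ t₂ t₃ : ℝ) : Prop :=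
  ∃ a b c d : ℝ, ¬(a = 0 ∧ b = 0 ∧ c = 0 ∧ d = 0) ∧ a ^ 2 + b ^ 2 + c ^ 2 = d ^ 2 ∧
    a * gammaAff m x₀ t₁ 0 + b * gammaAff m x₀ t₁ 1 + c * gammaAff m x₀ t₁ 2
      + d * gammaAff m x₀ t₁ 3 = 0 ∧
    a * gammaAff m x₀ t₂ 0 + b * gammaAff m x₀ t₂ 1 + c * gammaAff m x₀ t₂ 2
      + d * gammaAff m x₀ t₂ 3 = 0 ∧
    a * gammaAff m x₀ t₃ 0 + b * gammaAff m x₀ t₃ 1 + c * gammaAff m x₀ t₃ 2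
      + d * gammaAff m x₀ t₃ 3 = 0


/-!
A plane `a X + b Y + c Z + d U = 0` meets `Γ` where
`b t³ + m (a + d x₀) t² + (c m x₀ - b) t - a m = 0`. Expressing the plane through
`Γ(t₁), Γ(t₂), Γ(t₃)` by Vieta's formulas, tangency to the quadric becomes a symmetric
multilinear relation `F(t₁², t₂², t₃²) = 0`. If `r, r'` are the roots of
`u² - (1 - m² + m² x₀²) u - m²`, then `F` is proportional to
`r' (r' - 1) ∏ (uᵢ - r) - r (r - 1) ∏ (uᵢ - r')`, so on the web
`∏ (tᵢ² - r) / (tᵢ² - r')` is constant and `t ↦ log |(t² - r) / (t² - r')|` gives the abelian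
relation. For `t₁, t₂` near `0` the relation solves for `t₃²` near `1 + m² x₀² > r`, which
provides the intervals.
-/

open Real Set Topology

def webPolynomial (m x₀ u₁ u₂ u₃ : ℝ) : ℝ :=
  x₀ ^ 2 * (u₁ * u₂ * u₃) + m ^ 2 * x₀ ^ 2 + (1 - u₁) * (1 - u₂) * (1 - u₃)

theorem plane_apply_gammaAff (m x₀ a b c d t : ℝ) :
    a * gammaAff m x₀ t 0 + b * gammaAff m x₀ t 1 + c * gammaAff m x₀ t 2
        + d * gammaAff m x₀ t 3
      = b * t ^ 3 + m * (a + d * x₀) * t ^ 2 + (c * m * x₀ - b) * t + -a * m := by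
  simp only [gammaAff, Matrix.cons_val_zero, Matrix.cons_val_one, Matrix.cons_val_two,
    Matrix.cons_val_three, Matrix.head_cons, Matrix.tail_cons]
  ring

theorem cubic_coeffs_of_three_roots {R : Type*} [CommRing R] [IsDomain R] {a b c d t₁ t₂ t₃ : R}
    (h₁₂ : t₁ ≠ t₂) (h₁₃ : t₁ ≠ t₃) (h₂₃ : t₂ ≠ t₃)
    (h₁ : a * t₁ ^ 3 + b * t₁ ^ 2 + c * t₁ + d = 0)
    (h₂ : a * t₂ ^ 3 + b * t₂ ^ 2 + c * t₂ + d = 0)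
    (h₃ : a * t₃ ^ 3 + b * t₃ ^ 2 + c * t₃ + d = 0) :
    b = -a * (t₁ + t₂ + t₃) ∧ c = a * (t₁ * t₂ + t₁ * t₃ + t₂ * t₃) ∧
      d = -a * (t₁ * t₂ * t₃) := by
  have g₁₂ : a * (t₁ ^ 2 + t₁ * t₂ + t₂ ^ 2) + b * (t₁ + t₂) + c = 0 :=
    mul_left_cancel₀ (sub_ne_zero.mpr h₁₂) (by linear_combination h₁ - h₂)
  have g₁₃ : a * (t₁ ^ 2 + t₁ * t₃ + t₃ ^ 2) + b * (t₁ + t₃) + c = 0 :=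
    mul_left_cancel₀ (sub_ne_zero.mpr h₁₃) (by linear_combination h₁ - h₃)
  have hb : b = -a * (t₁ + t₂ + t₃) :=
    mul_left_cancel₀ (sub_ne_zero.mpr h₂₃) (by linear_combination g₁₂ - g₁₃)
  have hc : c = a * (t₁ * t₂ + t₁ * t₃ + t₂ * t₃) := by
    linear_combination g₁₂ - (t₁ + t₂) * hb
  exact ⟨hb, hc, by linear_combination h₁ - t₁ ^ 2 * hb - t₁ * hc⟩

theorem OnCommonTangentPlane.webPolynomial_eq_zero {m x₀ t₁ t₂ t₃ : ℝ} (hm : m ≠ 0)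
    (hx₀ : x₀ ≠ 0) (h₁₂ : t₁ ≠ t₂) (h₁₃ : t₁ ≠ t₃) (h₂₃ : t₂ ≠ t₃)
    (h : OnCommonTangentPlane m x₀ t₁ t₂ t₃) :
    webPolynomial m x₀ (t₁ ^ 2) (t₂ ^ 2) (t₃ ^ 2) = 0 := by
  obtain ⟨a, b, c, d, hne, htan, h₁, h₂, h₃⟩ := h
  rw [plane_apply_gammaAff] at h₁ h₂ h₃
  obtain ⟨hB, hC, hD⟩ := cubic_coeffs_of_three_roots h₁₂ h₁₃ h₂₃ h₁ h₂ h₃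
  have hb : b ≠ 0 := by
    rintro rfl
    have ha : a = 0 := by simpa [hm] using hD
    have hd : d = 0 := by simpa [hm, hx₀, ha] using hB
    have hc : c = 0 := by simpa [hm, hx₀] using hC
    exact hne ⟨ha, rfl, hc, hd⟩
  have key : b ^ 2 * webPolynomial m x₀ (t₁ ^ 2) (t₂ ^ 2) (t₃ ^ 2) = 0 := by
    unfold webPolynomial
    linear_combination (m ^ 2 * x₀ ^ 2) * htan
      + x₀ ^ 2 * (b * (t₁ * t₂ * t₃) + a * m) * hD
      - (b + b * (t₁ * t₂ + t₁ * t₃ + t₂ * t₃) + c * m * x₀) * hC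
      - (b * (t₁ + t₂ + t₃ + t₁ * t₂ * t₃) - d * m * x₀) * (hB + hD)
  exact (mul_eq_zero.mp key).resolve_left (pow_ne_zero 2 hb)

theorem onCommonTangentPlane_of_webPolynomial_eq_zero {m x₀ t₁ t₂ t₃ : ℝ} (hm : m ≠ 0)
    (hx₀ : x₀ ≠ 0) (h : webPolynomial m x₀ (t₁ ^ 2) (t₂ ^ 2) (t₃ ^ 2) = 0) :
    OnCommonTangentPlane m x₀ t₁ t₂ t₃ := by
  -- the plane with `b = 1` whose cubic has roots `t₁, t₂, t₃`
  refine ⟨t₁ * t₂ * t₃ / m, 1, (1 + (t₁ * t₂ + t₁ * t₃ + t₂ * t₃)) / (m * x₀),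
    -(t₁ + t₂ + t₃ + t₁ * t₂ * t₃) / (m * x₀), fun h => one_ne_zero h.2.1, ?_, ?_, ?_, ?_⟩
  · unfold webPolynomial at h
    field_simp
    linear_combination h
  all_goals
    rw [plane_apply_gammaAff]
    field_simp
    ring

theorem webPolynomial_linearization {m x₀ r r' : ℝ} (hsum : r + r' = 1 - m ^ 2 + m ^ 2 * x₀ ^ 2)
    (hprod : r * r' = -m ^ 2) (u₁ u₂ u₃ : ℝ) :
    r' * (r' - 1) * ((u₁ - r) * (u₂ - r) * (u₃ - r))
        - r * (r - 1) * ((u₁ - r') * (u₂ - r') * (u₃ - r'))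
      = m ^ 2 * (r' - r) * webPolynomial m x₀ u₁ u₂ u₃ := by
  calc _ = (r' - r) * ((r + r' - 1) * (u₁ * u₂ * u₃)
          - r * r' * (u₁ * u₂ + u₁ * u₃ + u₂ * u₃) + r * r' * (u₁ + u₂ + u₃)
          + r * r' * (r * r' - (r + r'))) := by ring
    _ = _ := by
      rw [hsum, hprod]
      unfold webPolynomial
      ring

-- `Real.log` is `log |·|`, so this is the right potential also between `r'` and `r`.
noncomputable def logRatio (r r' u : ℝ) : ℝ :=
  Real.log ((u - r) / (u - r'))

section logRatio

variable {r r' : ℝ}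

theorem logRatio_add_logRatio_add_logRatio {m x₀ u₁ u₂ u₃ : ℝ}
    (hsum : r + r' = 1 - m ^ 2 + m ^ 2 * x₀ ^ 2) (hprod : r * r' = -m ^ 2)
    (hr' : r' < 0) (hu : webPolynomial m x₀ u₁ u₂ u₃ = 0)
    (hu₁ : u₁ ≠ r ∧ u₁ ≠ r') (hu₂ : u₂ ≠ r ∧ u₂ ≠ r') (hu₃ : u₃ ≠ r ∧ u₃ ≠ r') :
    logRatio r r' u₁ + logRatio r r' u₂ + logRatio r r' u₃
      = Real.log (r * (r - 1) / (r' * (r' - 1))) := by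
  have hne : ∀ {u}, u ≠ r ∧ u ≠ r' → (u - r) / (u - r') ≠ 0 := fun h =>
    div_ne_zero (sub_ne_zero.mpr h.1) (sub_ne_zero.mpr h.2)
  have hprod_ratio : (u₁ - r) / (u₁ - r') * ((u₂ - r) / (u₂ - r')) * ((u₃ - r) / (u₃ - r'))
      = r * (r - 1) / (r' * (r' - 1)) := by
    have hlin := webPolynomial_linearization hsum hprod u₁ u₂ u₃
    rw [hu, mul_zero, sub_eq_zero] at hlin
    rw [div_mul_div_comm, div_mul_div_comm, div_eq_div_iff]
    · linear_combination hlin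
    · exact mul_ne_zero (mul_ne_zero (sub_ne_zero.mpr hu₁.2) (sub_ne_zero.mpr hu₂.2))
        (sub_ne_zero.mpr hu₃.2)
    · exact mul_ne_zero hr'.ne (by linarith)
  unfold logRatio
  rw [← Real.log_mul (hne hu₁) (hne hu₂), ← Real.log_mul (mul_ne_zero (hne hu₁) (hne hu₂))
    (hne hu₃), hprod_ratio]

theorem strictMonoOn_sub_div_sub (h : r' < r) :
    StrictMonoOn (fun u => (u - r) / (u - r')) (Ioi r') := by
  intro u hu v hv huv
  rw [mem_Ioi] at hu hv
  rw [div_lt_div_iff₀ (sub_pos.mpr hu) (sub_pos.mpr hv)]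
  nlinarith [mul_pos (sub_pos.mpr huv) (sub_pos.mpr h)]

theorem strictAntiOn_logRatio (h : r' < r) : StrictAntiOn (logRatio r r') (Ioo r' r) :=
  Real.strictAntiOn_log.comp_strictMonoOn ((strictMonoOn_sub_div_sub h).mono Ioo_subset_Ioi_self)
    fun _ hu => div_neg_of_neg_of_pos (sub_neg.mpr hu.2) (sub_pos.mpr hu.1)

theorem strictMonoOn_logRatio (h : r' < r) : StrictMonoOn (logRatio r r') (Ioi r) :=
  Real.strictMonoOn_log.comp ((strictMonoOn_sub_div_sub h).mono (Ioi_subset_Ioi h.le))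
    fun _ hu => div_pos (sub_pos.mpr hu) (sub_pos.mpr (h.trans hu))

theorem continuousOn_logRatio {s : Set ℝ} (hs : r ∉ s) (hs' : r' ∉ s) :
    ContinuousOn (logRatio r r') s :=
  have hne : ∀ {a}, a ∉ s → ∀ u ∈ s, u - a ≠ 0 := fun ha u hu =>
    sub_ne_zero.mpr (ne_of_mem_of_not_mem hu ha)
  ContinuousOn.log (ContinuousOn.div (by fun_prop) (by fun_prop) (hne hs'))
    fun u hu => div_ne_zero (hne hs u hu) (hne hs' u hu)

theorem mapsTo_sq_Ioo_sqrt (hr' : r' < 0) :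
    MapsTo (· ^ 2) (Ioo 0 √r) (Ioo r' r) :=
  fun _ ht => ⟨hr'.trans (pow_pos ht.1 2), (Real.lt_sqrt ht.1.le).mp ht.2⟩

theorem mapsTo_sq_Ioi_sqrt : MapsTo (· ^ 2) (Ioi √r) (Ioi r) :=
  fun _ ht => (Real.sqrt_lt' ((Real.sqrt_nonneg r).trans_lt ht)).mp ht

theorem strictAntiOn_logRatio_sq (hr' : r' < 0) (h : r' < r) :
    StrictAntiOn (fun t => logRatio r r' (t ^ 2)) (Ioo 0 √r) :=
  (strictAntiOn_logRatio h).comp_strictMonoOn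
    ((pow_left_strictMonoOn₀ two_ne_zero).mono fun _ ht => ht.1.le) (mapsTo_sq_Ioo_sqrt hr')

theorem strictMonoOn_logRatio_sq (h : r' < r) :
    StrictMonoOn (fun t => logRatio r r' (t ^ 2)) (Ioi √r) :=
  (strictMonoOn_logRatio h).comp
    ((pow_left_strictMonoOn₀ two_ne_zero).mono fun _ ht => (Real.sqrt_nonneg r).trans ht.le)
    mapsTo_sq_Ioi_sqrt

theorem continuousOn_logRatio_sq_Ioo (hr' : r' < 0) :
    ContinuousOn (fun t => logRatio r r' (t ^ 2)) (Ioo 0 √r) :=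
  (continuousOn_logRatio (by simp) (by simp)).comp (continuous_pow 2).continuousOn
    (mapsTo_sq_Ioo_sqrt hr')

theorem continuousOn_logRatio_sq_Ioi (h : r' < r) :
    ContinuousOn (fun t => logRatio r r' (t ^ 2)) (Ioi √r) :=
  (continuousOn_logRatio (by simp) (by simpa using h.le)).comp (continuous_pow 2).continuousOn
    mapsTo_sq_Ioi_sqrt

end logRatio

noncomputable def thirdRoot (m x₀ u₁ u₂ : ℝ) : ℝ :=
  (m ^ 2 * x₀ ^ 2 + (1 - u₁) * (1 - u₂)) / ((1 - u₁) * (1 - u₂) - x₀ ^ 2 * (u₁ * u₂))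

theorem webPolynomial_thirdRoot {m x₀ u₁ u₂ : ℝ}
    (h : (1 - u₁) * (1 - u₂) - x₀ ^ 2 * (u₁ * u₂) ≠ 0) :
    webPolynomial m x₀ u₁ u₂ (thirdRoot m x₀ u₁ u₂) = 0 := by
  have hdiv := div_mul_cancel₀ (m ^ 2 * x₀ ^ 2 + (1 - u₁) * (1 - u₂)) h
  unfold webPolynomial thirdRoot
  linear_combination -hdiv

theorem eventually_thirdRoot_mem (m x₀ : ℝ) {s : Set ℝ} (hs : s ∈ 𝓝 (1 + m ^ 2 * x₀ ^ 2)) :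
    ∀ᶠ p : ℝ × ℝ in 𝓝 0, (1 - p.1 ^ 2) * (1 - p.2 ^ 2) - x₀ ^ 2 * (p.1 ^ 2 * p.2 ^ 2) ≠ 0 ∧
      thirdRoot m x₀ (p.1 ^ 2) (p.2 ^ 2) ∈ s := by
  have hden : ContinuousAt
      (fun p : ℝ × ℝ => (1 - p.1 ^ 2) * (1 - p.2 ^ 2) - x₀ ^ 2 * (p.1 ^ 2 * p.2 ^ 2)) 0 := by
    fun_prop
  have hden0 : (1 - (0 : ℝ × ℝ).1 ^ 2) * (1 - (0 : ℝ × ℝ).2 ^ 2)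
      - x₀ ^ 2 * ((0 : ℝ × ℝ).1 ^ 2 * (0 : ℝ × ℝ).2 ^ 2) ≠ 0 := by simp
  have hroot : ContinuousAt (fun p : ℝ × ℝ => thirdRoot m x₀ (p.1 ^ 2) (p.2 ^ 2)) 0 :=
    ContinuousAt.div (by fun_prop) hden hden0
  refine (hden.eventually_ne hden0).and (hroot.preimage_mem_nhds ?_)
  simpa [thirdRoot, add_comm] using hs

theorem exists_third_point {m x₀ r : ℝ} (hm : m ≠ 0) (hx₀ : x₀ ≠ 0) (hr : 0 ≤ r)
    (hrK : r < 1 + m ^ 2 * x₀ ^ 2) :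
    ∃ δ > 0, ∀ t₁ t₂, |t₁| < δ → |t₂| < δ →
      ∃ t₃ ∈ Ioo √r √(m ^ 2 * x₀ ^ 2 + 2), OnCommonTangentPlane m x₀ t₁ t₂ t₃ := by
  obtain ⟨δ, hδ, hnear⟩ := Metric.eventually_nhds_iff.mp
    (eventually_thirdRoot_mem m x₀
      (Ioo_mem_nhds hrK (show 1 + m ^ 2 * x₀ ^ 2 < m ^ 2 * x₀ ^ 2 + 2 by linarith)))
  refine ⟨δ, hδ, fun t₁ t₂ ht₁ ht₂ => ?_⟩
  obtain ⟨hden, hr₃, hK₃⟩ := @hnear (t₁, t₂) (by simpa [Prod.dist_eq] using ⟨ht₁, ht₂⟩)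
  have hu₃ : 0 ≤ thirdRoot m x₀ (t₁ ^ 2) (t₂ ^ 2) := hr.trans hr₃.le
  refine ⟨√(thirdRoot m x₀ (t₁ ^ 2) (t₂ ^ 2)),
    ⟨Real.sqrt_lt_sqrt hr hr₃, Real.sqrt_lt_sqrt hu₃ hK₃⟩,
    onCommonTangentPlane_of_webPolynomial_eq_zero hm hx₀ ?_⟩
  rw [Real.sq_sqrt hu₃]
  exact webPolynomial_thirdRoot hden

theorem exists_add_eq_mul_eq_neg (S c : ℝ) (hc : 0 < c) :
    ∃ r r' : ℝ, r' < 0 ∧ r + r' = S ∧ r * r' = -c := by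
  have hw := Real.sq_sqrt (by positivity : 0 ≤ S ^ 2 + 4 * c)
  refine ⟨(S + √(S ^ 2 + 4 * c)) / 2, (S - √(S ^ 2 + 4 * c)) / 2, ?_, by ring,
    by linear_combination -hw / 4⟩
  have : S < √(S ^ 2 + 4 * c) := by
    rcases le_or_gt S 0 with hS | hS
    · exact hS.trans_lt (Real.sqrt_pos.mpr (by positivity))
    · exact (Real.lt_sqrt hS.le).mpr (by linarith)
  linarith

theorem exists_web_roots {m x₀ : ℝ} (hm : m ≠ 0) (hx₀ : x₀ ≠ 0) :
    ∃ r r' : ℝ, r' < 0 ∧ 1 < r ∧ r < 1 + m ^ 2 * x₀ ^ 2 ∧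
      r + r' = 1 - m ^ 2 + m ^ 2 * x₀ ^ 2 ∧ r * r' = -m ^ 2 := by
  have hm2 : 0 < m ^ 2 := by positivity
  have hK : 0 < m ^ 2 * x₀ ^ 2 := by positivity
  obtain ⟨r, r', hr', hsum, hprod⟩ := exists_add_eq_mul_eq_neg (1 - m ^ 2 + m ^ 2 * x₀ ^ 2) _ hm2
  -- `(u - r) * (u - r')` is negative at `u = 1` and positive at `u = 1 + m²x₀²`
  have h1 : (1 - r) * (1 - r') = -(m ^ 2 * x₀ ^ 2) := by linear_combination -hsum + hprod
  have hK1 : (1 + m ^ 2 * x₀ ^ 2 - r) * (1 + m ^ 2 * x₀ ^ 2 - r') = m ^ 2 * (m ^ 2 * x₀ ^ 2) := by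
    linear_combination -(1 + m ^ 2 * x₀ ^ 2) * hsum + hprod
  refine ⟨r, r', hr', ?_, ?_, hsum, hprod⟩
  · nlinarith
  · nlinarith [mul_pos hm2 hK]

/-- for every `m, x₀ > 0` the circular 3-web on the unit sphere with polar
curve `Γ` is hexagonal: there are nonempty open intervals `I₁, I₂, I₃ ⊆ ℝ` and continuous
strictly monotone functions `φᵢ : Iᵢ → ℝ` such that (i) for every `(t₁,t₂) ∈ I₁ × I₂`
some `t₃ ∈ I₃` puts `Γ(t₁), Γ(t₂), Γ(t₃)` on a common tangent plane of the Möbius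
quadric, and (ii) whenever `tᵢ ∈ Iᵢ` and `Γ(t₁), Γ(t₂), Γ(t₃)` lie on a common tangent
plane, then `φ₁(t₁) + φ₂(t₂) + φ₃(t₃) = 0` (an abelian relation: vanishing of the
Blaschke curvature via the converse of Abel's theorem). -/
theorem twisted_cubic_web_is_hexagonal (m x₀ : ℝ) (hm : 0 < m) (hx₀ : 0 < x₀) :
    ∃ (a₁ b₁ a₂ b₂ a₃ b₃ : ℝ) (φ₁ φ₂ φ₃ : ℝ → ℝ),
      a₁ < b₁ ∧ a₂ < b₂ ∧ a₃ < b₃ ∧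
      (ContinuousOn φ₁ (Set.Ioo a₁ b₁) ∧
        (StrictMonoOn φ₁ (Set.Ioo a₁ b₁) ∨ StrictAntiOn φ₁ (Set.Ioo a₁ b₁))) ∧
      (ContinuousOn φ₂ (Set.Ioo a₂ b₂) ∧
        (StrictMonoOn φ₂ (Set.Ioo a₂ b₂) ∨ StrictAntiOn φ₂ (Set.Ioo a₂ b₂))) ∧
      (ContinuousOn φ₃ (Set.Ioo a₃ b₃) ∧
        (StrictMonoOn φ₃ (Set.Ioo a₃ b₃) ∨ StrictAntiOn φ₃ (Set.Ioo a₃ b₃))) ∧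
      (∀ t₁ ∈ Set.Ioo a₁ b₁, ∀ t₂ ∈ Set.Ioo a₂ b₂,
        ∃ t₃ ∈ Set.Ioo a₃ b₃, OnCommonTangentPlane m x₀ t₁ t₂ t₃) ∧
      (∀ t₁ ∈ Set.Ioo a₁ b₁, ∀ t₂ ∈ Set.Ioo a₂ b₂, ∀ t₃ ∈ Set.Ioo a₃ b₃,
        OnCommonTangentPlane m x₀ t₁ t₂ t₃ → φ₁ t₁ + φ₂ t₂ + φ₃ t₃ = 0) := by
  obtain ⟨r, r', hr', hr, hrK, hsum, hprod⟩ := exists_web_roots hm.ne' hx₀.ne'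
  have hr'r : r' < r := by linarith
  obtain ⟨δ, hδ, hthird⟩ := exists_third_point hm.ne' hx₀.ne' (by linarith) hrK
  obtain ⟨α, hα, hαδ, hα1⟩ : ∃ α : ℝ, 0 < α ∧ 4 * α ≤ δ ∧ 4 * α ≤ 1 :=
    ⟨min δ 1 / 4, by positivity, by linarith [min_le_left δ 1], by linarith [min_le_right δ 1]⟩
  have hαr : 4 * α < √r := hα1.trans_lt (Real.lt_sqrt_of_sq_lt (by linarith))
  have hI₁ : Ioo α (2 * α) ⊆ Ioo 0 √r := Ioo_subset_Ioo (by linarith) (by linarith)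
  have hI₂ : Ioo (3 * α) (4 * α) ⊆ Ioo 0 √r := Ioo_subset_Ioo (by linarith) hαr.le
  have hI₃ : Ioo √r √(m ^ 2 * x₀ ^ 2 + 2) ⊆ Ioi √r := Ioo_subset_Ioi_self
  set φ := fun t => logRatio r r' (t ^ 2)
  set C := Real.log (r * (r - 1) / (r' * (r' - 1)))
  have hφ := continuousOn_logRatio_sq_Ioo (r := r) hr'
  have hφ_anti := strictAntiOn_logRatio_sq hr' hr'r
  refine ⟨α, 2 * α, 3 * α, 4 * α, √r, √(m ^ 2 * x₀ ^ 2 + 2), φ, φ, fun t => φ t + -C,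
    by linarith, by linarith, Real.sqrt_lt_sqrt (by linarith) (by linarith),
    ⟨hφ.mono hI₁, .inr (hφ_anti.mono hI₁)⟩, ⟨hφ.mono hI₂, .inr (hφ_anti.mono hI₂)⟩,
    ⟨((continuousOn_logRatio_sq_Ioi hr'r).mono hI₃).add continuousOn_const,
      .inl (((strictMonoOn_logRatio_sq hr'r).mono hI₃).add_const _)⟩, ?_, ?_⟩
  · intro t₁ ht₁ t₂ ht₂
    exact hthird t₁ t₂ (abs_lt.mpr ⟨by linarith [ht₁.1], by linarith [ht₁.2]⟩)
      (abs_lt.mpr ⟨by linarith [ht₂.1], by linarith [ht₂.2]⟩)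
  · intro t₁ ht₁ t₂ ht₂ t₃ ht₃ hplane
    have hu₁ := mapsTo_sq_Ioo_sqrt hr' (hI₁ ht₁)
    have hu₂ := mapsTo_sq_Ioo_sqrt hr' (hI₂ ht₂)
    have hu₃ := mapsTo_sq_Ioi_sqrt (hI₃ ht₃)
    have hF := hplane.webPolynomial_eq_zero hm.ne' hx₀.ne' (by linarith [ht₁.2, ht₂.1])
      (by linarith [ht₁.2, ht₃.1]) (by linarith [ht₂.2, ht₃.1])
    have hlog := logRatio_add_logRatio_add_logRatio hsum hprod hr' hF ⟨hu₁.2.ne, hu₁.1.ne'⟩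
      ⟨hu₂.2.ne, hu₂.1.ne'⟩ ⟨hu₃.ne', (hr'r.trans hu₃).ne'⟩
    linarith
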